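/- arXiv:1802.09214 — 7 statements merged into one kernel-verified Lean document; each statement's English description precedes it below -/
import Mathlib

section
/- For every integer n ≥ 1, the integral I(n) = ∫₀¹ (xⁿ + (1-x)ⁿ)^{1/n} dx satisfies I(n) = 2 ∫₀¹ (1 + uⁿ)^{1/n} / (1+u)³ du. -/
/-!
The integrand is symmetric under `x ↦ 1 - x`, so `I(n)` is twice the integral over `[0, 1/2]`.
There the substitution `x = u / (1 + u)` (with `dx = du / (1 + u)²`) maps `[0, 1]` onto `[0, 1/2]`,
and homogeneity of `(aⁿ + bⁿ)^{1/n}` pulls out the factor `1 / (1 + u)` from the new integrand.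
-/

open Real intervalIntegral Set

theorem intervalIntegral.integral_eq_two_smul_integral_of_symm {E : Type*} [NormedAddCommGroup E]
    [NormedSpace ℝ E] {f : ℝ → E} {a b : ℝ} (hf : IntervalIntegrable f MeasureTheory.volume a b)
    (hsymm : ∀ x, f (a + b - x) = f x) :
    ∫ x in a..b, f x = (2 : ℝ) • ∫ x in a..(a + b) / 2, f x := by
  have hmid : (a + b) / 2 ∈ uIcc a b := by
    rcases le_total a b with hab | hab
    · rw [uIcc_of_le hab]; constructor <;> linarith
    · rw [uIcc_of_ge hab]; constructor <;> linarith
  have hright : ∫ x in (a + b) / 2..b, f x = ∫ x in a..(a + b) / 2, f x := by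
    calc ∫ x in (a + b) / 2..b, f x = ∫ x in (a + b) / 2..b, f (a + b - x) := by simp only [hsymm]
      _ = ∫ x in a..(a + b) / 2, f x := by
        rw [integral_comp_sub_left]; congr 1 <;> ring
  rw [← integral_add_adjacent_intervals (hf.mono_set (uIcc_subset_uIcc_left hmid))
    (hf.mono_set (uIcc_subset_uIcc_right hmid)), hright, two_smul]

theorem intervalIntegral.integral_comp_div_one_add {f : ℝ → ℝ} (hf : Continuous f) {b : ℝ}
    (hb : 0 ≤ b) :
    ∫ x in (0 : ℝ)..b / (1 + b), f x = ∫ u in (0 : ℝ)..b, f (u / (1 + u)) / (1 + u) ^ 2 := by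
  have hpos : ∀ u ∈ uIcc 0 b, 0 < 1 + u := fun u hu => by
    rw [uIcc_of_le hb] at hu; linarith [hu.1]
  have hderiv : ∀ u ∈ uIcc 0 b, HasDerivAt (fun u : ℝ => u / (1 + u)) (1 / (1 + u) ^ 2) u :=
    fun u hu => ((hasDerivAt_id' u).fun_div ((hasDerivAt_id' u).const_add 1)
      (hpos u hu).ne').congr_deriv (by ring)
  have hcont : ContinuousOn (fun u : ℝ => 1 / (1 + u) ^ 2) (uIcc 0 b) :=
    continuousOn_const.div (by fun_prop) fun u hu => pow_ne_zero 2 (hpos u hu).ne'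
  simpa only [Function.comp, zero_div, mul_one_div] using
    (integral_comp_mul_deriv hderiv hcont hf).symm

theorem Real.mul_pow_add_mul_pow_rpow_inv {c x y : ℝ} (hc : 0 ≤ c) (hx : 0 ≤ x) (hy : 0 ≤ y)
    {n : ℕ} (hn : n ≠ 0) :
    ((c * x) ^ n + (c * y) ^ n) ^ (n⁻¹ : ℝ) = c * (x ^ n + y ^ n) ^ (n⁻¹ : ℝ) := by
  rw [mul_pow, mul_pow, ← mul_add, mul_rpow (by positivity) (by positivity),
    pow_rpow_inv_natCast hc hn]

/-- For every integer `n ≥ 1`,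
`I(n) = ∫₀¹ (xⁿ + (1-x)ⁿ)^{1/n} dx = 2 ∫₀¹ (1 + uⁿ)^{1/n} / (1+u)³ du`. -/
theorem stmt0 (n : ℕ) (hn : 1 ≤ n) :
    (∫ x in (0:ℝ)..1, (x ^ n + (1 - x) ^ n) ^ ((n : ℝ)⁻¹)) =
      2 * ∫ u in (0:ℝ)..1, (1 + u ^ n) ^ ((n : ℝ)⁻¹) / (1 + u) ^ 3 := by
  have hn0 : n ≠ 0 := by omega
  set f : ℝ → ℝ := fun x => (x ^ n + (1 - x) ^ n) ^ ((n : ℝ)⁻¹)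
  have hf : Continuous f := (by fun_prop : Continuous fun x : ℝ => x ^ n + (1 - x) ^ n).rpow_const
    fun _ => Or.inr (by positivity)
  have hsymm : ∀ x, f (0 + 1 - x) = f x := fun x => by
    simp only [f, zero_add, sub_sub_cancel]; rw [add_comm]
  rw [integral_eq_two_smul_integral_of_symm (hf.intervalIntegrable 0 1) hsymm, smul_eq_mul,
    show ((0 : ℝ) + 1) / 2 = 1 / (1 + 1) by norm_num, integral_comp_div_one_add hf zero_le_one]
  congr 1
  refine integral_congr fun u hu_mem => ?_
  have hu : 0 ≤ u := by rw [uIcc_of_le zero_le_one] at hu_mem; exact hu_mem.1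
  have h1u : 0 < 1 + u := by linarith
  have hx : u / (1 + u) = (1 + u)⁻¹ * u := by field_simp
  have hy : 1 - u / (1 + u) = (1 + u)⁻¹ * 1 := by field_simp; ring
  simp only [f]
  rw [hy, hx, mul_pow_add_mul_pow_rpow_inv (inv_nonneg.2 h1u.le) hu zero_le_one hn0, one_pow,
    add_comm (u ^ n)]
  field_simp
end

section
/- For integers n ≥ 1, p ≥ 1 and any real z with -1 ≤ z ≤ 1, ((-1)^{n+p-1}/((n-1)! p!)) ∫₀¹ (log t)^{n-1} (log(1-zt))^p / t dt = ∑_{j₁ > j₂ > ⋯ > j_p ≥ 1} z^{j₁}/(j₁^{n+1} j₂ ⋯ j_p), where the integral converges absolutely and the series converges. -/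
/-!
The generating function `∑_{j ≥ 1} ζ_{j-1}({1}_k) x ^ j / j` equals
`(-log (1 - x)) ^ (k + 1) / (k + 1)!`. As formal power series both sides vanish at `0`, and both
derivatives are the product of `∑_j x ^ j` with the series for `k - 1`: on the left this is the
recursion `ζ_j({1}_k) = ∑_{i ≤ j} ζ_{i-1}({1}_{k-1}) / i`. For `|x| < 1` the formal identity
becomes a numerical one through Cauchy products of series with nonnegative coefficients.
Inserting this expansion of `log (1 - z t) ^ p` into the integral and integrating termwise with
`∫₀¹ t ^ (j - 1) (-log t) ^ m dt = m! / j ^ (m + 1)` (a Gamma integral after `t = e^{-u}`) gives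
the series. Termwise integration is legitimate because `ζ_{j-1}({1}_{p-1}) ≤ H_j ^ (p - 1)`
grows like a power of `log j`, so the integrals of the absolute values of the terms are summable.
-/

/-- Truncated multiple zeta value `ζ_r({1}_k)`. -/
noncomputable def zt1 : ℕ → ℕ → ℝ
  | _, 0 => 1
  | r, k + 1 => ∑ n ∈ Finset.Icc 1 r, (1 / (n : ℝ)) * zt1 (n - 1) k

open Real MeasureTheory PowerSeries Set Filter
open scoped Nat ENNReal

lemma zt1_zero_right (r : ℕ) : zt1 r 0 = 1 := rfl

lemma zt1_succ_right (r k : ℕ) :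
    zt1 r (k + 1) = ∑ n ∈ Finset.Icc 1 r, (1 / (n : ℝ)) * zt1 (n - 1) k := rfl

lemma zt1_nonneg (r k : ℕ) : 0 ≤ zt1 r k := by
  induction k generalizing r with
  | zero => exact zero_le_one
  | succ k ih => exact Finset.sum_nonneg fun n _ => mul_nonneg (by positivity) (ih _)

lemma zt1_succ_right_eq_sum_range (r k : ℕ) :
    zt1 r (k + 1) = ∑ n ∈ Finset.range (r + 1), zt1 (n - 1) k / n := by
  rw [zt1_succ_right, Finset.range_eq_Ico, Finset.sum_eq_sum_Ico_succ_bot (Nat.succ_pos r)]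
  simp [div_eq_inv_mul, Finset.Ico_add_one_right_eq_Icc]

lemma zt1_mono (k : ℕ) : Monotone (zt1 · k) := by
  intro r s hrs
  cases k with
  | zero => exact le_rfl
  | succ k =>
    exact Finset.sum_le_sum_of_subset_of_nonneg (Finset.Icc_subset_Icc_right hrs)
      fun n _ _ => mul_nonneg (by positivity) (zt1_nonneg _ _)

lemma zt1_one (r : ℕ) : zt1 r 1 = harmonic r := by
  simp [zt1_succ_right, zt1_zero_right, harmonic_eq_sum_Icc]

lemma zt1_le_zt1_one_pow (r k : ℕ) : zt1 r k ≤ zt1 r 1 ^ k := by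
  induction k generalizing r with
  | zero => exact le_of_eq (pow_zero _).symm
  | succ k ih =>
    calc zt1 r (k + 1) ≤ ∑ n ∈ Finset.Icc 1 r, (1 / (n : ℝ)) * zt1 r 1 ^ k := by
          refine Finset.sum_le_sum fun n hn => mul_le_mul_of_nonneg_left ?_ (by positivity)
          exact (ih _).trans (pow_le_pow_left₀ (zt1_nonneg _ _)
            (zt1_mono 1 (by grind)) k)
      _ = zt1 r 1 ^ (k + 1) := by
          rw [← Finset.sum_mul, pow_succ']
          simp [zt1_succ_right r 0, zt1_zero_right]

lemma harmonic_le_mul_rpow {ε : ℝ} (hε : 0 < ε) (r : ℕ) :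
    (harmonic r : ℝ) ≤ (1 + ε⁻¹) * ((r : ℝ) + 1) ^ ε := by
  have hr : (0 : ℝ) ≤ r := r.cast_nonneg
  have h1 : (1 : ℝ) ≤ ((r : ℝ) + 1) ^ ε := one_le_rpow (by linarith) hε.le
  have h2 : (r : ℝ) ^ ε ≤ ((r : ℝ) + 1) ^ ε := rpow_le_rpow hr (by linarith) hε.le
  calc (harmonic r : ℝ) ≤ 1 + Real.log r := harmonic_le_one_add_log r
    _ ≤ 1 + (r : ℝ) ^ ε / ε := by gcongr; exact log_le_rpow_div hr hε
    _ ≤ (1 + ε⁻¹) * ((r : ℝ) + 1) ^ ε := by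
      have := mul_le_mul_of_nonneg_right h2 (inv_pos.mpr hε).le
      rw [div_eq_mul_inv]
      nlinarith

lemma zt1_le_mul_rpow_one_half (r k : ℕ) :
    zt1 r k ≤ (2 * k + 3 : ℝ) ^ k * ((r : ℝ) + 1) ^ (1 / 2 : ℝ) := by
  set ε : ℝ := (2 * k + 2)⁻¹
  have hε : 0 < ε := by positivity
  have hr : (1 : ℝ) ≤ (r : ℝ) + 1 := by linarith [r.cast_nonneg (α := ℝ)]
  calc zt1 r k ≤ ((1 + ε⁻¹) * ((r : ℝ) + 1) ^ ε) ^ k := by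
        refine (zt1_le_zt1_one_pow r k).trans (pow_le_pow_left₀ (zt1_nonneg _ _) ?_ k)
        rw [zt1_one]
        exact harmonic_le_mul_rpow hε r
    _ = (2 * k + 3 : ℝ) ^ k * ((r : ℝ) + 1) ^ (ε * k) := by
      rw [mul_pow, ← rpow_mul_natCast (by positivity), inv_inv]
      ring_nf
    _ ≤ (2 * k + 3 : ℝ) ^ k * ((r : ℝ) + 1) ^ (1 / 2 : ℝ) := by
      gcongr
      rw [inv_mul_le_iff₀ (by positivity)]
      linarith

theorem summable_zt1_div_pow (k : ℕ) {s : ℕ} (hs : 2 ≤ s) :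
    Summable fun j : ℕ => zt1 j k / ((j : ℝ) + 1) ^ s := by
  have hsum : Summable fun j : ℕ => (2 * k + 3 : ℝ) ^ k * ((j : ℝ) + 1) ^ (-(3 / 2) : ℝ) := by
    refine Summable.mul_left _ ?_
    exact_mod_cast (summable_nat_add_iff 1).mpr (Real.summable_nat_rpow.mpr (by norm_num))
  refine hsum.of_nonneg_of_le (fun j => by positivity [zt1_nonneg j k]) fun j => ?_
  have hj : (1 : ℝ) ≤ (j : ℝ) + 1 := by linarith [j.cast_nonneg (α := ℝ)]
  calc zt1 j k / ((j : ℝ) + 1) ^ s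
      ≤ (2 * k + 3 : ℝ) ^ k * ((j : ℝ) + 1) ^ (1 / 2 : ℝ) / ((j : ℝ) + 1) ^ (2 : ℝ) := by
        rw [rpow_two]
        gcongr
        exact zt1_le_mul_rpow_one_half j k
    _ = (2 * k + 3 : ℝ) ^ k * ((j : ℝ) + 1) ^ (-(3 / 2) : ℝ) := by
        rw [mul_div_assoc, ← rpow_sub (by positivity)]
        norm_num

-- The constant coefficient `zt1 (0 - 1) k / 0` is `0` because `x / 0 = 0`.
noncomputable def zt1Series (k : ℕ) : ℝ⟦X⟧ := mk fun j => zt1 (j - 1) k / j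

lemma coeff_zt1Series (k j : ℕ) : coeff j (zt1Series k) = zt1 (j - 1) k / j := coeff_mk _ _

lemma constantCoeff_zt1Series (k : ℕ) : constantCoeff (zt1Series k) = 0 := by
  simp [zt1Series]

lemma coeff_derivative_zt1Series (k n : ℕ) : coeff n (d⁄dX ℝ (zt1Series k)) = zt1 n k := by
  rw [coeff_derivative, coeff_zt1Series, Nat.add_sub_cancel]
  push_cast
  field_simp

lemma derivative_zt1Series_zero : d⁄dX ℝ (zt1Series 0) = PowerSeries.mk 1 := by
  ext n
  rw [coeff_derivative_zt1Series, coeff_mk]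
  rfl

lemma derivative_zt1Series_succ (k : ℕ) :
    d⁄dX ℝ (zt1Series (k + 1)) = zt1Series k * PowerSeries.mk 1 := by
  ext n
  rw [coeff_derivative_zt1Series, coeff_mul, Finset.Nat.sum_antidiagonal_eq_sum_range_succ_mk,
    zt1_succ_right_eq_sum_range]
  simp [coeff_zt1Series]

theorem zt1Series_zero_pow (k : ℕ) :
    zt1Series 0 ^ (k + 1) = ((k + 1)! : ℝ) • zt1Series k := by
  induction k with
  | zero => simp
  | succ k ih =>
    refine derivative.ext ?_ (by simp [constantCoeff_zt1Series])
    rw [derivative_pow, derivative_zt1Series_zero, Nat.add_sub_cancel, ih, Derivation.map_smul,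
      derivative_zt1Series_succ, Nat.factorial_succ (k + 1)]
    push_cast
    simp only [Algebra.smul_def, map_mul, map_add, map_natCast, map_one]
    ring

lemma coeff_mul_mul_pow (f g : ℝ⟦X⟧) (x : ℝ) (j : ℕ) :
    coeff j (f * g) * x ^ j =
      ∑ kl ∈ Finset.HasAntidiagonal.antidiagonal j,
        coeff kl.1 f * x ^ kl.1 * (coeff kl.2 g * x ^ kl.2) := by
  rw [coeff_mul, Finset.sum_mul]
  refine Finset.sum_congr rfl fun kl hkl => ?_
  rw [← Finset.HasAntidiagonal.mem_antidiagonal.mp hkl, pow_add]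
  ring

lemma norm_coeff_mul_pow {f : ℝ⟦X⟧} {j : ℕ} (hf : 0 ≤ coeff j f) (x : ℝ) :
    ‖coeff j f * x ^ j‖ = coeff j f * |x| ^ j := by
  rw [norm_mul, norm_pow, Real.norm_of_nonneg hf, Real.norm_eq_abs]

-- Nonnegative coefficients turn summability at `|x|` into the absolute summability at `x` that
-- the Cauchy product formula needs.
theorem hasSum_coeff_mul_mul_pow {f g : ℝ⟦X⟧} (hf : ∀ j, 0 ≤ coeff j f)
    (hg : ∀ j, 0 ≤ coeff j g) {x a b : ℝ}
    (hfa : HasSum (fun j => coeff j f * x ^ j) a) (hf' : Summable fun j => coeff j f * |x| ^ j)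
    (hgb : HasSum (fun j => coeff j g * x ^ j) b) (hg' : Summable fun j => coeff j g * |x| ^ j) :
    HasSum (fun j => coeff j (f * g) * x ^ j) (a * b) := by
  have hfn : Summable fun j => ‖coeff j f * x ^ j‖ := by simpa only [norm_coeff_mul_pow (hf _)]
  have hgn : Summable fun j => ‖coeff j g * x ^ j‖ := by simpa only [norm_coeff_mul_pow (hg _)]
  simp_rw [coeff_mul_mul_pow]
  rw [← hfa.tsum_eq, ← hgb.tsum_eq,
    tsum_mul_tsum_eq_tsum_sum_antidiagonal_of_summable_norm hfn hgn]
  exact (summable_norm_sum_mul_antidiagonal_of_summable_norm hfn hgn).of_norm.hasSum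

lemma coeff_pow_nonneg {f : ℝ⟦X⟧} (hf : ∀ j, 0 ≤ coeff j f) (n j : ℕ) :
    0 ≤ coeff j (f ^ n) := by
  induction n generalizing j with
  | zero => rw [pow_zero, coeff_one]; split_ifs <;> norm_num
  | succ n ih =>
    rw [pow_succ, coeff_mul]
    exact Finset.sum_nonneg fun kl _ => mul_nonneg (ih _) (hf _)

theorem hasSum_coeff_pow_mul_pow {f : ℝ⟦X⟧} (hf : ∀ j, 0 ≤ coeff j f) {g : ℝ → ℝ} {r : ℝ}
    (hg : ∀ x, |x| < r → HasSum (fun j => coeff j f * x ^ j) (g x)) (n : ℕ) {x : ℝ}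
    (hx : |x| < r) : HasSum (fun j => coeff j (f ^ n) * x ^ j) (g x ^ n) := by
  induction n generalizing x with
  | zero =>
    simp only [pow_zero, coeff_one]
    convert hasSum_ite_eq 0 (1 : ℝ) using 2 with j
    split_ifs <;> simp_all
  | succ n ih =>
    have hx' : |(|x|)| < r := by rwa [abs_abs]
    rw [pow_succ, pow_succ]
    exact hasSum_coeff_mul_mul_pow (coeff_pow_nonneg hf n) hf (ih hx) (ih hx').summable
      (hg x hx) (hg |x| hx').summable

lemma coeff_zt1Series_nonneg (k j : ℕ) : 0 ≤ coeff j (zt1Series k) := by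
  rw [coeff_zt1Series]
  exact div_nonneg (zt1_nonneg _ _) j.cast_nonneg

lemma hasSum_coeff_zt1Series_zero_mul_pow {x : ℝ} (hx : |x| < 1) :
    HasSum (fun j => coeff j (zt1Series 0) * x ^ j) (-log (1 - x)) := by
  rw [← hasSum_nat_add_iff' 1]
  simpa [coeff_zt1Series, zt1_zero_right, div_eq_inv_mul, mul_comm] using
    Real.hasSum_pow_div_log_of_abs_lt_one hx

theorem hasSum_neg_log_one_sub_pow_div_factorial (k : ℕ) {x : ℝ} (hx : |x| < 1) :
    HasSum (fun j : ℕ => zt1 j k / (j + 1) * x ^ (j + 1))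
      ((-log (1 - x)) ^ (k + 1) / (k + 1)!) := by
  have h := (hasSum_coeff_pow_mul_pow (coeff_zt1Series_nonneg 0)
    (fun _ => hasSum_coeff_zt1Series_zero_mul_pow) (k + 1) hx).div_const ((k + 1)! : ℝ)
  rw [← hasSum_nat_add_iff' 1] at h
  have hk : ((k + 1)! : ℝ) ≠ 0 := by positivity
  simpa [zt1Series_zero_pow, coeff_zt1Series, hk, mul_div_right_comm] using h

lemma image_exp_neg_Ioi_zero : (fun u : ℝ => exp (-u)) '' Ioi 0 = Ioo 0 1 := by
  ext t
  constructor
  · rintro ⟨u, hu, rfl⟩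
    exact ⟨exp_pos _, exp_lt_one_iff.mpr (neg_lt_zero.mpr hu)⟩
  · rintro ⟨ht0, ht1⟩
    exact ⟨-log t, neg_pos.mpr (log_neg ht0 ht1), by simp [exp_log ht0]⟩

lemma hasDerivWithinAt_exp_neg (u : ℝ) (s : Set ℝ) :
    HasDerivWithinAt (fun u : ℝ => exp (-u)) (-exp (-u)) s u := by
  simpa using ((hasDerivAt_neg u).exp).hasDerivWithinAt

lemma injOn_exp_neg (s : Set ℝ) : InjOn (fun u : ℝ => exp (-u)) s :=
  fun _ _ _ _ h => neg_injective (exp_injective h)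

theorem integral_Ioo_zero_one_eq_integral_Ioi_exp_neg (g : ℝ → ℝ) :
    ∫ t in Ioo 0 1, g t = ∫ u in Ioi 0, exp (-u) * g (exp (-u)) := by
  rw [← image_exp_neg_Ioi_zero, integral_image_eq_integral_abs_deriv_smul measurableSet_Ioi
    (fun u _ => hasDerivWithinAt_exp_neg u _) (injOn_exp_neg _)]
  simp [abs_of_pos (exp_pos _)]

theorem integrableOn_Ioo_zero_one_iff_exp_neg (g : ℝ → ℝ) :
    IntegrableOn g (Ioo 0 1) ↔ IntegrableOn (fun u => exp (-u) * g (exp (-u))) (Ioi 0) := by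
  rw [← image_exp_neg_Ioi_zero, integrableOn_image_iff_integrableOn_abs_deriv_smul measurableSet_Ioi
    (fun u _ => hasDerivWithinAt_exp_neg u _) (injOn_exp_neg _)]
  simp [abs_of_pos (exp_pos _)]

lemma exp_neg_mul_pow_mul_neg_log_pow (k m : ℕ) (u : ℝ) :
    exp (-u) * (exp (-u) ^ k * (-log (exp (-u))) ^ m) = u ^ m * exp (-((k + 1) * u)) := by
  rw [log_exp, neg_neg, ← exp_nat_mul, show -((k + 1) * u) = -u + k * -u by ring, exp_add]
  ring

theorem integrableOn_pow_mul_neg_log_pow (k m : ℕ) :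
    IntegrableOn (fun t : ℝ => t ^ k * (-log t) ^ m) (Ioo 0 1) := by
  rw [integrableOn_Ioo_zero_one_iff_exp_neg]
  simp_rw [exp_neg_mul_pow_mul_neg_log_pow]
  have h := integrableOn_rpow_mul_exp_neg_mul_rpow (s := m) (p := 1) (b := k + 1)
    (by linarith [m.cast_nonneg (α := ℝ)]) one_pos (by positivity)
  convert h using 3 with u
  · rw [rpow_natCast]
  · rw [rpow_one, neg_mul]

theorem integral_pow_mul_neg_log_pow (k m : ℕ) :
    ∫ t in Ioo 0 1, t ^ k * (-log t) ^ m = m ! / ((k : ℝ) + 1) ^ (m + 1) := by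
  rw [integral_Ioo_zero_one_eq_integral_Ioi_exp_neg]
  simp_rw [exp_neg_mul_pow_mul_neg_log_pow]
  have h := integral_rpow_mul_exp_neg_mul_Ioi (a := m + 1) (r := k + 1) (by positivity)
    (by positivity)
  rw [Gamma_nat_eq_factorial, ← Nat.cast_succ, rpow_natCast] at h
  simp_rw [Nat.cast_succ, add_sub_cancel_right, rpow_natCast] at h
  rw [h, div_pow, one_pow, one_div_mul_eq_div]

theorem integrable_and_hasSum_integral_of_summable_integral_norm {α E : Type*} [MeasurableSpace α]
    {μ : Measure α} [NormedAddCommGroup E] [NormedSpace ℝ E] {F : ℕ → α → E} {f : α → E}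
    (hF : ∀ i, Integrable (F i) μ) (hs : Summable fun i => ∫ a, ‖F i a‖ ∂μ)
    (hf : ∀ᵐ a ∂μ, HasSum (F · a) (f a)) :
    Integrable f μ ∧ HasSum (fun i => ∫ a, F i a ∂μ) (∫ a, f a ∂μ) := by
  refine ⟨⟨aestronglyMeasurable_of_tendsto_ae atTop
    (fun s => Finset.aestronglyMeasurable_fun_sum s fun i _ => (hF i).1) hf, ?_⟩, ?_⟩
  swap
  · rw [← integral_congr_ae (hf.mono fun a ha => ha.tsum_eq)]
    exact hasSum_integral_of_summable_integral_norm hF hs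
  have hle : ∀ᵐ a ∂μ, ‖f a‖ₑ ≤ ∑' i, ‖F i a‖ₑ := by
    filter_upwards [hf] with a ha
    rw [← ha.tsum_eq]
    exact enorm_tsum_le_tsum_enorm
  calc ∫⁻ a, ‖f a‖ₑ ∂μ ≤ ∫⁻ a, ∑' i, ‖F i a‖ₑ ∂μ := lintegral_mono_ae hle
    _ = ∑' i, ENNReal.ofReal (∫ a, ‖F i a‖ ∂μ) := by
      rw [lintegral_tsum fun i => (hF i).1.enorm]
      exact tsum_congr fun i => (ofReal_integral_norm_eq_lintegral_enorm (hF i)).symm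
    _ = ENNReal.ofReal (∑' i, ∫ a, ‖F i a‖ ∂μ) :=
      (ENNReal.ofReal_tsum_of_nonneg (fun i => integral_nonneg fun a => norm_nonneg _) hs).symm
    _ < ∞ := ENNReal.ofReal_lt_top

lemma integral_norm_const_mul_pow_mul_neg_log_pow (c : ℝ) (k m : ℕ) :
    ∫ t in Ioo 0 1, ‖c * (t ^ k * (-log t) ^ m)‖ = |c| * (m ! / ((k : ℝ) + 1) ^ (m + 1)) := by
  rw [← integral_pow_mul_neg_log_pow, ← integral_const_mul]
  refine setIntegral_congr_fun measurableSet_Ioo fun t ⟨ht0, ht1⟩ => ?_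
  have hlog : 0 ≤ -log t := neg_nonneg.mpr (log_nonpos ht0.le ht1.le)
  rw [norm_mul, Real.norm_eq_abs, Real.norm_of_nonneg
    (mul_nonneg (pow_nonneg ht0.le k) (pow_nonneg hlog m))]

lemma hasSum_neg_log_pow_mul_neg_log_one_sub_pow_div (N k : ℕ) {z t : ℝ} (hz : |z| ≤ 1)
    (ht : t ∈ Ioo 0 1) :
    HasSum (fun j : ℕ => (k + 1)! * (zt1 j k / (j + 1)) * z ^ (j + 1) * (t ^ j * (-log t) ^ N))
      ((-log t) ^ N * (-log (1 - z * t)) ^ (k + 1) / t) := by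
  obtain ⟨ht0, ht1⟩ := ht
  have hzt : |z * t| < 1 := by
    rw [abs_mul, abs_of_pos ht0]
    nlinarith
  have hval : (-log t) ^ N * (-log (1 - z * t)) ^ (k + 1) / t =
      (k + 1)! * (-log t) ^ N / t * ((-log (1 - z * t)) ^ (k + 1) / (k + 1)!) := by
    field_simp
  rw [hval]
  refine ((hasSum_neg_log_one_sub_pow_div_factorial k hzt).mul_left _).congr_fun fun j => ?_
  field_simp
  ring

theorem integrableOn_and_hasSum_integral_neg_log_pow_mul_neg_log_one_sub_pow (N k : ℕ) {z : ℝ}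
    (hz : |z| ≤ 1) :
    IntegrableOn (fun t => (-log t) ^ N * (-log (1 - z * t)) ^ (k + 1) / t) (Ioo 0 1) ∧
    HasSum (fun j : ℕ => N ! * (k + 1)! * (z ^ (j + 1) / ((j : ℝ) + 1) ^ (N + 2) * zt1 j k))
      (∫ t in Ioo 0 1, (-log t) ^ N * (-log (1 - z * t)) ^ (k + 1) / t) := by
  set a : ℕ → ℝ := fun j => (k + 1)! * (zt1 j k / (j + 1))
  have ha (j : ℕ) : 0 ≤ a j := by positivity [zt1_nonneg j k]
  have hsum : Summable fun j => ∫ t in Ioo 0 1, ‖a j * z ^ (j + 1) * (t ^ j * (-log t) ^ N)‖ := by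
    refine ((summable_zt1_div_pow k (by omega : 2 ≤ N + 2)).mul_left (N ! * (k + 1)! : ℝ))
      |>.of_nonneg_of_le (fun j => integral_nonneg fun t => norm_nonneg _) fun j => ?_
    rw [integral_norm_const_mul_pow_mul_neg_log_pow, abs_mul, abs_of_nonneg (ha j), abs_pow]
    calc a j * |z| ^ (j + 1) * (N ! / ((j : ℝ) + 1) ^ (N + 1))
        ≤ a j * 1 * (N ! / ((j : ℝ) + 1) ^ (N + 1)) := by
          gcongr
          · exact ha j
          · exact pow_le_one₀ (abs_nonneg z) hz
      _ = N ! * (k + 1)! * (zt1 j k / ((j : ℝ) + 1) ^ (N + 2)) := by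
          simp only [a]
          field_simp
          ring
  obtain ⟨hint, hhas⟩ := integrable_and_hasSum_integral_of_summable_integral_norm
    (fun j => (integrableOn_pow_mul_neg_log_pow j N).const_mul (a j * z ^ (j + 1))) hsum
    ((ae_restrict_iff' measurableSet_Ioo).mpr
      (Eventually.of_forall fun t => hasSum_neg_log_pow_mul_neg_log_one_sub_pow_div N k hz))
  refine ⟨hint, hhas.congr_fun fun j => ?_⟩
  rw [integral_const_mul, integral_pow_mul_neg_log_pow]
  simp only [a]
  field_simp
  ring

/-- For integers `n ≥ 1`, `p ≥ 1` and any real `z` with `-1 ≤ z ≤ 1`,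
`((-1)^{n+p-1}/((n-1)! p!)) ∫₀¹ (log t)^{n-1} (log(1-zt))^p / t dt
  = ∑_{j₁ > j₂ > ⋯ > j_p ≥ 1} z^{j₁}/(j₁^{n+1} j₂ ⋯ j_p)`,
where the integral converges absolutely and the series converges.
The series over strictly decreasing `p`-tuples is written as the iterated sum
`∑_{j₁ ≥ 1} z^{j₁} ζ_{j₁-1}({1}_{p-1}) / j₁^{n+1}`. -/
theorem stmt7 (n p : ℕ) (hn : 1 ≤ n) (hp : 1 ≤ p) (z : ℝ) (hz1 : -1 ≤ z) (hz2 : z ≤ 1) :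
    MeasureTheory.IntegrableOn
      (fun t : ℝ => Real.log t ^ (n - 1) * Real.log (1 - z * t) ^ p / t) (Set.Ioo 0 1) ∧
    Summable (fun j : ℕ+ => z ^ (j : ℕ) / (j : ℝ) ^ (n + 1) * zt1 ((j : ℕ) - 1) (p - 1)) ∧
    ((-1 : ℝ) ^ (n + p - 1) / ((Nat.factorial (n - 1) : ℝ) * (Nat.factorial p : ℝ))) *
        ∫ t in (0:ℝ)..1, Real.log t ^ (n - 1) * Real.log (1 - z * t) ^ p / t =
      ∑' j : ℕ+, z ^ (j : ℕ) / (j : ℝ) ^ (n + 1) * zt1 ((j : ℕ) - 1) (p - 1) := by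
  obtain ⟨N, rfl⟩ : ∃ N, n = N + 1 := ⟨n - 1, by omega⟩
  obtain ⟨k, rfl⟩ : ∃ k, p = k + 1 := ⟨p - 1, by omega⟩
  obtain ⟨hint, hsum⟩ :=
    integrableOn_and_hasSum_integral_neg_log_pow_mul_neg_log_one_sub_pow N k (abs_le.mpr ⟨hz1, hz2⟩)
  have hsign : (fun t => log t ^ N * log (1 - z * t) ^ (k + 1) / t) =
      fun t => (-1) ^ (N + (k + 1)) * ((-log t) ^ N * (-log (1 - z * t)) ^ (k + 1) / t) := by
    have hneg (x : ℝ) (m : ℕ) : x ^ m = (-1) ^ m * (-x) ^ m := by rw [← mul_pow]; simp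
    ext t
    rw [hneg (log t), hneg (log (1 - z * t)), pow_add]
    ring
  have hS : HasSum (fun j : ℕ+ => z ^ (j : ℕ) / (j : ℝ) ^ (N + 1 + 1) * zt1 ((j : ℕ) - 1) k)
      ((∫ t in Ioo 0 1, (-log t) ^ N * (-log (1 - z * t)) ^ (k + 1) / t) / (N ! * (k + 1)!)) := by
    rw [hasSum_pnat_iff_hasSum_succ (f := fun j => z ^ j / (j : ℝ) ^ (N + 1 + 1) * zt1 (j - 1) k)]
    have hc : (N ! * (k + 1)! : ℝ) ≠ 0 := by positivity
    simpa [mul_div_cancel_left₀ _ hc] using hsum.div_const (N ! * (k + 1)! : ℝ)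
  simp only [Nat.add_sub_cancel, show N + 1 + (k + 1) - 1 = N + (k + 1) by omega]
  refine ⟨hsign ▸ hint.const_mul _, hS.summable, ?_⟩
  rw [hS.tsum_eq, intervalIntegral.integral_of_le zero_le_one, integral_Ioc_eq_integral_Ioo, hsign,
    integral_const_mul, div_mul_eq_mul_div, ← mul_assoc, ← pow_add, Even.neg_one_pow ⟨_, rfl⟩,
    one_mul]
end

section
/- For all nonnegative integers n and k, ∑_{j=0}^{n} E_{k+j}(0) C(n, j) = (-1)^{n+k} ∑_{j=0}^{k} E_{n+j}(0) C(k, j), where C denotes binomial coefficients. -/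
/-!
The exponential generating function of `E_m(0)` is `2 / (e^t + 1)`, and `t` times it equals
`2 (B(t) - B(2t))` for the Bernoulli generating function `B(t) = t / (e^t - 1)`; this is where the
closed form through Bernoulli numbers comes from. Comparing coefficients in
`(e^t + 1) · 2 / (e^t + 1) = 2` gives `∑_j C(k,j) E_j(0) = -E_k(0)` for `k ≥ 1`, and as `E_k(0)`
vanishes for even `k ≥ 2` this becomes `∑_j C(k,j) E_j(0) = (-1)^k E_k(0)` for all `k`.

For any sequence with this property, `T(n,k) = ∑_j a_{k+j} C(n,j)` and `(-1)^{n+k} T(k,n)` obey the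
same Pascal recursion `T(n+1,k) = T(n,k) + T(n,k+1)` and agree at `n = 0`.
-/

/-- `E_m(0)`: the value of the `m`-th Euler polynomial at `0`.
`E_0(0) = 1` and `E_m(0) = 2(1 - 2^{m+1}) B_{m+1}/(m+1)` for `m ≥ 1`. -/
noncomputable def eulerAtZero : ℕ → ℝ
  | 0 => 1
  | m + 1 => 2 * (1 - 2 ^ (m + 2)) * ((bernoulli (m + 2) : ℚ) : ℝ) / (m + 2)

open Finset Nat PowerSeries

theorem sum_range_succ_mul_choose_succ {R : Type*} [Semiring R] (f : ℕ → R) (n : ℕ) :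
    ∑ j ∈ range (n + 1 + 1), f j * ((n + 1).choose j : R) =
      ∑ j ∈ range (n + 1), f j * (n.choose j : R) +
        ∑ j ∈ range (n + 1), f (j + 1) * (n.choose j : R) := by
  rw [sum_range_succ', sum_range_succ' (fun j => f j * (n.choose j : R)),
    sum_range_succ (fun j => f (j + 1) * ((n + 1).choose (j + 1) : R))]
  simp only [choose_succ_succ', cast_add, mul_add, sum_add_distrib, choose_succ_self,
    add_zero, choose_zero_right, sum_range_succ _ n]
  abel

theorem sum_add_mul_choose_swap {R : Type*} [CommRing R] (a : ℕ → R)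
    (ha : ∀ k, ∑ j ∈ range (k + 1), a j * (k.choose j : R) = (-1) ^ k * a k) (n k : ℕ) :
    ∑ j ∈ range (n + 1), a (k + j) * (n.choose j : R) =
      (-1) ^ (n + k) * ∑ j ∈ range (k + 1), a (n + j) * (k.choose j : R) := by
  have pascal (m i : ℕ) : ∑ j ∈ range (i + 1 + 1), a (m + j) * ((i + 1).choose j : R) =
      ∑ j ∈ range (i + 1), a (m + j) * (i.choose j : R) +
        ∑ j ∈ range (i + 1), a (m + 1 + j) * (i.choose j : R) := by
    rw [sum_range_succ_mul_choose_succ (fun j => a (m + j))]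
    exact congrArg _ (sum_congr rfl fun j _ => by rw [add_right_comm m 1 j, add_assoc])
  induction n generalizing k with
  | zero => simp [ha, ← mul_assoc, ← pow_add, Even.neg_one_pow ⟨k, rfl⟩]
  | succ n ih =>
    rw [pascal, ih, ih, pascal]
    ring

theorem bernoulliPowerSeries_sub_rescale_two_mul_exp_add_one
    (A : Type*) [CommRing A] [IsDomain A] [Algebra ℚ A] :
    (bernoulliPowerSeries A - rescale 2 (bernoulliPowerSeries A)) * (exp A + 1) = X := by
  have hexp : exp A - 1 ≠ 0 := fun h => by
    simpa [coeff_exp] using congrArg (coeff 1) h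
  have hsq : exp A ^ 2 = rescale 2 (exp A) := by
    exact_mod_cast exp_pow_eq_rescale_exp (A := A) 2
  apply mul_right_cancel₀ hexp
  calc (bernoulliPowerSeries A - rescale 2 (bernoulliPowerSeries A)) * (exp A + 1) * (exp A - 1)
      = bernoulliPowerSeries A * (exp A - 1) * (exp A + 1)
          - rescale 2 (bernoulliPowerSeries A * (exp A - 1)) := by
        rw [map_mul, map_sub, map_one, ← hsq]
        ring
    _ = X * (exp A - 1) := by
        rw [bernoulliPowerSeries_mul_exp_sub_one, rescale_X, map_ofNat]
        ring

theorem coeff_mk_div_factorial_mul_exp {K : Type*} [Field K] [CharZero K] (a : ℕ → K) (n : ℕ) :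
    coeff n (mk (fun m => a m / m !) * exp K) =
      (∑ j ∈ range (n + 1), a j * (n.choose j : K)) / n ! := by
  rw [coeff_mul, Nat.sum_antidiagonal_eq_sum_range_succ_mk, sum_div]
  refine sum_congr rfl fun j hj => ?_
  rw [coeff_mk, coeff_exp, cast_choose K (Nat.lt_succ_iff.mp (mem_range.mp hj))]
  have : (n ! : K) ≠ 0 := cast_ne_zero.mpr n.factorial_ne_zero
  simp only [one_div, map_inv₀, map_natCast]
  field_simp

noncomputable def eulerAtZeroSeries : ℝ⟦X⟧ := mk fun m => eulerAtZero m / m !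

theorem X_mul_eulerAtZeroSeries :
    X * eulerAtZeroSeries = 2 * (bernoulliPowerSeries ℝ - rescale 2 (bernoulliPowerSeries ℝ)) := by
  rw [← map_ofNat C 2]
  ext n
  rw [coeff_C_mul, map_sub, coeff_rescale, bernoulliPowerSeries, coeff_mk]
  rcases n with _ | m
  · simp
  rw [coeff_succ_X_mul, eulerAtZeroSeries, coeff_mk]
  rcases m with _ | m
  · norm_num [eulerAtZero, bernoulli_one]
  · simp only [eulerAtZero, factorial, eq_ratCast, Rat.cast_div, Rat.cast_natCast]
    push_cast
    field_simp
    ring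

theorem eulerAtZeroSeries_mul_exp_add_one : eulerAtZeroSeries * (exp ℝ + 1) = 2 :=
  X_mul_cancel <| by
    rw [← mul_assoc, X_mul_eulerAtZeroSeries, mul_assoc,
      bernoulliPowerSeries_sub_rescale_two_mul_exp_add_one, mul_comm]

theorem sum_eulerAtZero_mul_choose_of_ne_zero {k : ℕ} (hk : k ≠ 0) :
    ∑ j ∈ range (k + 1), eulerAtZero j * (k.choose j : ℝ) = -eulerAtZero k := by
  have h := congrArg (coeff k) eulerAtZeroSeries_mul_exp_add_one
  rw [mul_add, mul_one, map_add, eulerAtZeroSeries, coeff_mk_div_factorial_mul_exp, coeff_mk,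
    ← map_ofNat C 2, coeff_C, if_neg hk] at h
  have : (k ! : ℝ) ≠ 0 := cast_ne_zero.mpr k.factorial_ne_zero
  field_simp at h
  linarith

theorem eulerAtZero_eq_zero_of_even {k : ℕ} (hk : Even k) (hk0 : k ≠ 0) : eulerAtZero k = 0 := by
  obtain ⟨m, rfl⟩ := Nat.exists_eq_succ_of_ne_zero hk0
  have : bernoulli (m + 2) = 0 := bernoulli_eq_zero_of_odd hk.add_one (by omega)
  simp [eulerAtZero, this]

theorem sum_eulerAtZero_mul_choose (k : ℕ) :
    ∑ j ∈ range (k + 1), eulerAtZero j * (k.choose j : ℝ) = (-1) ^ k * eulerAtZero k := by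
  rcases eq_or_ne k 0 with rfl | hk
  · simp
  rw [sum_eulerAtZero_mul_choose_of_ne_zero hk]
  rcases k.even_or_odd with heven | hodd
  · simp [eulerAtZero_eq_zero_of_even heven hk]
  · simp [hodd.neg_one_pow]

/-- For all nonnegative integers `n` and `k`,
`∑_{j=0}^{n} E_{k+j}(0) C(n,j) = (-1)^{n+k} ∑_{j=0}^{k} E_{n+j}(0) C(k,j)`. -/
theorem stmt8 (n k : ℕ) :
    ∑ j ∈ Finset.range (n + 1), eulerAtZero (k + j) * (n.choose j : ℝ) =
      (-1 : ℝ) ^ (n + k) * ∑ j ∈ Finset.range (k + 1), eulerAtZero (n + j) * (k.choose j : ℝ) :=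
  sum_add_mul_choose_swap eulerAtZero sum_eulerAtZero_mul_choose n k
end

section
/- Let f : ℝ → ℝ be the logistic function f(t) = 1/(1 + e^{-t}). For every integer r ≥ 1 and every real t, the (r-1)-st derivative of f at t equals ∑_{j=1}^{r} (-1)^{j-1} (j-1)! S(r, j) f(t)^j, where S(r, j) denotes the Stirling numbers of the second kind. -/
/-!
The logistic function `σ = Real.sigmoid` solves `σ' = σ (1 - σ)`, so by the chain rule every
derivative of `σ` is a polynomial in `σ`: `σ^(n) = P_n(σ)` with `P_0 = X` and
`P_{n+1} = P_n' · X (1 - X)`. Writing `c(r, j)` for the coefficient of `X^j` in `P_{r-1}`, this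
gives `c(r+1, j) = j c(r, j) - (j-1) c(r, j-1)`, which under the substitution
`c(r, j) = (-1)^(j-1) (j-1)! S(r, j)` is the Stirling recurrence
`S(r+1, j) = j S(r, j) + S(r, j-1)`.
-/

/-- Stirling numbers of the second kind: `S(n,k)` is the number of ways to partition a set
of `n` elements into `k` nonempty subsets. -/
def stirling2 : ℕ → ℕ → ℕ
  | 0, 0 => 1
  | 0, _ + 1 => 0
  | _ + 1, 0 => 0
  | n + 1, k + 1 => (k + 1) * stirling2 n (k + 1) + stirling2 n k

open Polynomial

theorem stirling2_eq_zero_of_lt : ∀ {n k : ℕ}, n < k → stirling2 n k = 0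
  | 0, _ + 1, _ => rfl
  | n + 1, k + 1, h => by
    rw [stirling2, stirling2_eq_zero_of_lt (by omega : n < k + 1),
      stirling2_eq_zero_of_lt (by omega : n < k), mul_zero]

theorem iteratedDeriv_eval_comp_of_hasDerivAt {𝕜 : Type*} [NontriviallyNormedField 𝕜]
    {f : 𝕜 → 𝕜} {Q : 𝕜[X]} (hf : ∀ x, HasDerivAt f (Q.eval (f x)) x) (n : ℕ) (p : 𝕜[X]) :
    iteratedDeriv n (fun x => p.eval (f x)) =
      fun x => ((fun q => derivative q * Q)^[n] p).eval (f x) := by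
  induction n generalizing p with
  | zero => rfl
  | succ n ih =>
    have hderiv : deriv (fun x => p.eval (f x)) = fun x => (derivative p * Q).eval (f x) := by
      funext x
      exact ((p.hasDerivAt (f x)).comp x (hf x)).deriv.trans (eval_mul ..).symm
    rw [iteratedDeriv_succ', hderiv, ih, Function.iterate_succ_apply]

theorem coeff_derivative_mul_X_mul_one_sub_X {R : Type*} [CommRing R] (p : R[X]) (j : ℕ) :
    (derivative p * (X * (1 - X))).coeff j =
      j * p.coeff j - (j - 1 : ℕ) * p.coeff (j - 1) := by
  rw [mul_one_sub, mul_sub, ← mul_assoc, coeff_sub]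
  rcases j with _ | _ | j
  · simp
  · simp [coeff_mul_X, coeff_derivative]
  · simp only [coeff_mul_X, coeff_derivative, Nat.cast_add, Nat.cast_one, add_tsub_cancel_right]
    ring

def logisticCoeff (r j : ℕ) : ℤ := (-1) ^ (j - 1) * (j - 1).factorial * stirling2 r j

theorem logisticCoeff_succ_succ (n j : ℕ) :
    logisticCoeff (n + 2) j =
      j * logisticCoeff (n + 1) j - (j - 1 : ℕ) * logisticCoeff (n + 1) (j - 1) := by
  rcases j with _ | _ | j
  · simp [logisticCoeff, stirling2]
  · simp [logisticCoeff, stirling2]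
  · simp only [logisticCoeff, add_tsub_cancel_right, Nat.factorial_succ, Nat.cast_mul,
      Nat.cast_add, Nat.cast_one, stirling2]
    ring

noncomputable def logisticPoly (R : Type*) [CommRing R] (r : ℕ) : R[X] :=
  ∑ j ∈ Finset.Icc 1 r, C (logisticCoeff r j : R) * X ^ j

theorem coeff_logisticPoly {R : Type*} [CommRing R] {r : ℕ} (hr : 1 ≤ r) (j : ℕ) :
    (logisticPoly R r).coeff j = logisticCoeff r j := by
  rw [logisticPoly, finsetSum_coeff]
  simp only [coeff_C_mul_X_pow, Finset.sum_ite_eq, Finset.mem_Icc]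
  split_ifs with hj
  · rfl
  · obtain rfl | hrj : j = 0 ∨ r < j := by omega
    · obtain ⟨r, rfl⟩ := Nat.exists_eq_add_of_le' hr
      simp [logisticCoeff, stirling2]
    · simp [logisticCoeff, stirling2_eq_zero_of_lt hrj]

theorem iterate_derivative_mul_X_mul_one_sub_X (R : Type*) [CommRing R] (n : ℕ) :
    (fun q : R[X] => derivative q * (X * (1 - X)))^[n] X = logisticPoly R (n + 1) := by
  induction n with
  | zero => simp [logisticPoly, logisticCoeff, stirling2]
  | succ n ih =>
    ext j
    rw [Function.iterate_succ_apply', ih, coeff_derivative_mul_X_mul_one_sub_X,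
      coeff_logisticPoly (by omega), coeff_logisticPoly (by omega),
      coeff_logisticPoly (by omega), logisticCoeff_succ_succ]
    push_cast
    ring

/-- Let `f(t) = 1/(1 + e^{-t})` be the logistic function. For every integer
`r ≥ 1` and every real `t`, the `(r-1)`-st derivative of `f` at `t` equals
`∑_{j=1}^{r} (-1)^{j-1} (j-1)! S(r,j) f(t)^j`. -/
theorem stmt9 (r : ℕ) (hr : 1 ≤ r) (t : ℝ) :
    iteratedDeriv (r - 1) (fun t : ℝ => 1 / (1 + Real.exp (-t))) t =
      ∑ j ∈ Finset.Icc 1 r, (-1 : ℝ) ^ (j - 1) * (Nat.factorial (j - 1) : ℝ) *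
        (stirling2 r j : ℝ) * (1 / (1 + Real.exp (-t))) ^ j := by
  obtain ⟨n, rfl⟩ := Nat.exists_eq_add_of_le' hr
  have hsigmoid : (fun t : ℝ => 1 / (1 + Real.exp (-t))) = fun t => X.eval (Real.sigmoid t) := by
    simp [Real.sigmoid_def]
  have hderiv (x : ℝ) :
      HasDerivAt Real.sigmoid ((X * (1 - X) : ℝ[X]).eval (Real.sigmoid x)) x := by
    simpa using Real.hasDerivAt_sigmoid x
  rw [hsigmoid, iteratedDeriv_eval_comp_of_hasDerivAt hderiv, Nat.add_sub_cancel,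
    iterate_derivative_mul_X_mul_one_sub_X]
  simp [logisticPoly, eval_finsetSum, logisticCoeff, Real.sigmoid_def, mul_assoc]
end

section
/- There exists a constant C > 0 such that for all integers n ≥ 1 and all real x, |μ{u ∈ [0,1] : (uⁿ + (1-u)ⁿ)^{1/n} ≤ x} − μ{u ∈ [0,1] : max(u, 1-u) ≤ x}| ≤ C/n, where μ denotes Lebesgue measure on [0,1]. That is, the Kolmogorov distance between the distribution of Z_n = (Uⁿ + (1-U)ⁿ)^{1/n} and that of Z_∞ = max(U, 1-U) is at most C/n. -/
open MeasureTheory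

/-- There is a constant `C > 0` such that for all `n ≥ 1` and all real `x`,
`|μ{u ∈ [0,1] : (uⁿ + (1-u)ⁿ)^{1/n} ≤ x} − μ{u ∈ [0,1] : max(u, 1-u) ≤ x}| ≤ C/n`,
where `μ` is Lebesgue measure: the Kolmogorov distance between the distribution of
`Z_n = (Uⁿ + (1-U)ⁿ)^{1/n}` and that of `Z_∞ = max(U, 1-U)` is at most `C/n`. -/
theorem stmt13 :
    ∃ C : ℝ, 0 < C ∧ ∀ n : ℕ, 1 ≤ n → ∀ x : ℝ,
      |(volume {u ∈ Set.Icc (0:ℝ) 1 | (u ^ n + (1 - u) ^ n) ^ ((n : ℝ)⁻¹) ≤ x}).toReal -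
        (volume {u ∈ Set.Icc (0:ℝ) 1 | max u (1 - u) ≤ x}).toReal| ≤ C / n := by
  refine ⟨2 * Real.log 2, by positivity, ?_⟩
  intro n hn x
  have hn0 : n ≠ 0 := Nat.one_le_iff_ne_zero.mp hn
  have hnpos : (0:ℝ) < n := by exact_mod_cast Nat.pos_of_ne_zero hn0
  set c : ℝ := (2:ℝ) ^ (-(n:ℝ)⁻¹) with hc
  have hc_pos : 0 < c := Real.rpow_pos_of_pos (by norm_num) _
  have hc_le : c ≤ 1 :=
    Real.rpow_le_one_of_one_le_of_nonpos (by norm_num)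
      (by simp [inv_nonneg, hnpos.le])
  -- 1 - c ≤ log 2 / n
  have hkey : 1 - c ≤ Real.log 2 / n := by
    have h1 : c = Real.exp (Real.log 2 * (-(n:ℝ)⁻¹)) := by
      rw [hc, Real.rpow_def_of_pos (by norm_num)]
    have h2 : Real.log 2 * (-(n:ℝ)⁻¹) + 1 ≤ Real.exp (Real.log 2 * (-(n:ℝ)⁻¹)) :=
      Real.add_one_le_exp _
    rw [h1]
    have : Real.log 2 * (-(n:ℝ)⁻¹) = -(Real.log 2 / n) := by
      field_simp
    rw [this] at h2 ⊢
    linarith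
  set A := {u ∈ Set.Icc (0:ℝ) 1 | (u ^ n + (1 - u) ^ n) ^ ((n : ℝ)⁻¹) ≤ x} with hA_def
  set B := {u ∈ Set.Icc (0:ℝ) 1 | max u (1 - u) ≤ x} with hB_def
  -- pointwise bounds
  have hm_le_f : ∀ u ∈ Set.Icc (0:ℝ) 1,
      max u (1 - u) ≤ (u ^ n + (1 - u) ^ n) ^ ((n : ℝ)⁻¹) := by
    intro u hu
    obtain ⟨hu0, hu1⟩ := hu
    have h1u : (0:ℝ) ≤ 1 - u := by linarith
    have hm0 : (0:ℝ) ≤ max u (1 - u) := le_trans hu0 (le_max_left _ _)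
    have hpow : max u (1 - u) ^ n ≤ u ^ n + (1 - u) ^ n := by
      rcases max_cases u (1 - u) with ⟨h, _⟩ | ⟨h, _⟩ <;> rw [h]
      · exact le_add_of_nonneg_right (pow_nonneg h1u n)
      · exact le_add_of_nonneg_left (pow_nonneg hu0 n)
    calc max u (1 - u) = (max u (1 - u) ^ n) ^ ((n:ℝ)⁻¹) :=
          (Real.pow_rpow_inv_natCast hm0 hn0).symm
      _ ≤ (u ^ n + (1 - u) ^ n) ^ ((n:ℝ)⁻¹) :=
          Real.rpow_le_rpow (pow_nonneg hm0 n) hpow (by positivity)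
  have hf_le : ∀ u ∈ Set.Icc (0:ℝ) 1,
      (u ^ n + (1 - u) ^ n) ^ ((n : ℝ)⁻¹) ≤ (2:ℝ) ^ ((n:ℝ)⁻¹) * max u (1 - u) := by
    intro u hu
    obtain ⟨hu0, hu1⟩ := hu
    have h1u : (0:ℝ) ≤ 1 - u := by linarith
    have hm0 : (0:ℝ) ≤ max u (1 - u) := le_trans hu0 (le_max_left _ _)
    have hpow : u ^ n + (1 - u) ^ n ≤ 2 * max u (1 - u) ^ n := by
      have h1 : u ^ n ≤ max u (1 - u) ^ n := pow_le_pow_left₀ hu0 (le_max_left _ _) n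
      have h2 : (1 - u) ^ n ≤ max u (1 - u) ^ n := pow_le_pow_left₀ h1u (le_max_right _ _) n
      linarith
    calc (u ^ n + (1 - u) ^ n) ^ ((n:ℝ)⁻¹)
        ≤ (2 * max u (1 - u) ^ n) ^ ((n:ℝ)⁻¹) :=
          Real.rpow_le_rpow (by positivity) hpow (by positivity)
      _ = (2:ℝ) ^ ((n:ℝ)⁻¹) * (max u (1 - u) ^ n) ^ ((n:ℝ)⁻¹) :=
          Real.mul_rpow (by norm_num) (pow_nonneg hm0 n)
      _ = (2:ℝ) ^ ((n:ℝ)⁻¹) * max u (1 - u) := by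
          rw [Real.pow_rpow_inv_natCast hm0 hn0]
  -- A ⊆ B
  have hAB : A ⊆ B := by
    intro u hu
    exact ⟨hu.1, le_trans (hm_le_f u hu.1) hu.2⟩
  -- measurability
  have hA : MeasurableSet A := by
    have hg : Continuous fun u : ℝ => u ^ n + (1 - u) ^ n := by continuity
    have hf : Measurable fun u : ℝ => (u ^ n + (1 - u) ^ n) ^ ((n:ℝ)⁻¹) :=
      ((Real.continuous_rpow_const (by positivity)).comp hg).measurable
    exact measurableSet_Icc.inter (hf measurableSet_Iic)
  -- finiteness
  have hBsub : B ⊆ Set.Icc (0:ℝ) 1 := fun u hu => hu.1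
  have hBfin : volume B ≠ ⊤ := by
    refine ne_top_of_le_ne_top ?_ (measure_mono hBsub)
    simp [Real.volume_Icc]
  have hAfin : volume A ≠ ⊤ := ne_top_of_le_ne_top hBfin (measure_mono hAB)
  -- band containment
  set b : ℝ := min x 1 with hb
  have hdiff : B \ A ⊆ Set.Ioc (x * c) b ∪ Set.Ico (1 - b) (1 - x * c) := by
    intro u hu
    obtain ⟨⟨⟨hu0, hu1⟩, hmx⟩, hnA⟩ := hu
    have hfx : x < (u ^ n + (1 - u) ^ n) ^ ((n:ℝ)⁻¹) := by
      by_contra h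
      exact hnA ⟨⟨hu0, hu1⟩, not_lt.mp h⟩
    have h1u : (0:ℝ) ≤ 1 - u := by linarith
    have hlt : x < (2:ℝ) ^ ((n:ℝ)⁻¹) * max u (1 - u) :=
      lt_of_lt_of_le hfx (hf_le u ⟨hu0, hu1⟩)
    have hcmul : c * (2:ℝ) ^ ((n:ℝ)⁻¹) = 1 := by
      rw [hc, ← Real.rpow_add (by norm_num)]
      simp
    have hxc : x * c < max u (1 - u) := by
      have := mul_lt_mul_of_pos_left hlt hc_pos
      calc x * c = c * x := mul_comm _ _
        _ < c * ((2:ℝ) ^ ((n:ℝ)⁻¹) * max u (1 - u)) := this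
        _ = max u (1 - u) := by rw [← mul_assoc, hcmul, one_mul]
    have hmb : max u (1 - u) ≤ b := le_min hmx (max_le hu1 (by linarith))
    rcases max_cases u (1 - u) with ⟨h, _⟩ | ⟨h, _⟩ <;> rw [h] at hxc hmb
    · exact Or.inl ⟨hxc, hmb⟩
    · exact Or.inr ⟨by linarith, by linarith⟩
  -- measure of band
  have hband : volume (B \ A) ≤ ENNReal.ofReal (b - x * c) + ENNReal.ofReal (b - x * c) := by
    refine le_trans (measure_mono hdiff) (le_trans (measure_union_le _ _) ?_)
    rw [Real.volume_Ioc, Real.volume_Ico,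
      show (1 - x * c) - (1 - b) = b - x * c by ring]
  have hd_le : b - x * c ≤ Real.log 2 / n := by
    refine le_trans ?_ hkey
    rcases le_or_gt x 1 with hx | hx
    · have : b = x := min_eq_left hx
      rw [this]
      nlinarith
    · have : b = 1 := min_eq_right hx.le
      rw [this]
      nlinarith
  -- assemble
  have hmeas_le : volume A ≤ volume B := measure_mono hAB
  have hdiff_eq : volume (B \ A) = volume B - volume A :=
    measure_diff hAB hA.nullMeasurableSet hAfin
  have habs : |(volume A).toReal - (volume B).toReal| = (volume (B \ A)).toReal := by
    rw [abs_sub_comm, abs_of_nonneg (by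
      have := ENNReal.toReal_mono hBfin hmeas_le
      linarith), hdiff_eq, ENNReal.toReal_sub_of_le hmeas_le hBfin]
  rw [habs]
  have hlog_nn : 0 ≤ Real.log 2 / n := by
    apply div_nonneg (Real.log_nonneg (by norm_num)) hnpos.le
  calc (volume (B \ A)).toReal
      ≤ (ENNReal.ofReal (b - x * c) + ENNReal.ofReal (b - x * c)).toReal := by
        apply ENNReal.toReal_mono (by simp [ENNReal.add_ne_top]) hband
    _ ≤ Real.log 2 / n + Real.log 2 / n := by
        rw [ENNReal.toReal_add ENNReal.ofReal_ne_top ENNReal.ofReal_ne_top,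
          ENNReal.toReal_ofReal']
        have : max (b - x * c) 0 ≤ Real.log 2 / n := max_le hd_le hlog_nn
        linarith
    _ = 2 * Real.log 2 / n := by ring
end

section
/- As n → ∞ along positive integers, ∫₀¹ (xⁿ + (1-x)ⁿ)^{1/n} · max(x, 1-x) dx = 7/12 + O(1/n²); i.e., E(Z_n Z_∞) = (2/3)·(7/8) + O(n^{-2}), where Z_n = (Uⁿ + (1-U)ⁿ)^{1/n} and Z_∞ = max(U, 1-U) for U uniform on [0,1]. -/
/-!
The integrand is symmetric under `x ↦ 1 - x`, so the integral is twice the one over `[1/2, 1]`,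
where the integrand is `x · (xⁿ + (1 - x)ⁿ)^{1/n}`. There Bernoulli's inequality for the exponent
`1/n` gives `x ≤ (xⁿ + (1 - x)ⁿ)^{1/n} ≤ x (1 + ((1 - x)/x)ⁿ / n)`, and `((1 - x)/x)ⁿ ≤ (2(1 - x))ⁿ`
has integral `1/(2(n + 1))`. Hence the integral lies between `2 ∫_{1/2}^1 x² = 7/12` and
`7/12 + 1/(n(n + 1))`.
-/

open Asymptotics Filter Set MeasureTheory

lemma le_pow_add_pow_rpow_inv_natCast {a b : ℝ} (ha : 0 ≤ a) (hb : 0 ≤ b) {n : ℕ} (hn : n ≠ 0) :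
    a ≤ (a ^ n + b ^ n) ^ ((n : ℝ)⁻¹) :=
  calc a = (a ^ n) ^ ((n : ℝ)⁻¹) := (Real.pow_rpow_inv_natCast ha hn).symm
    _ ≤ (a ^ n + b ^ n) ^ ((n : ℝ)⁻¹) := by gcongr; exact le_add_of_nonneg_right (by positivity)

lemma pow_add_pow_rpow_inv_natCast_le {a b : ℝ} (ha : 0 < a) (hb : 0 ≤ b) {n : ℕ} (hn : n ≠ 0) :
    (a ^ n + b ^ n) ^ ((n : ℝ)⁻¹) ≤ a * (1 + (b / a) ^ n / n) := by
  have hfactor : a ^ n + b ^ n = a ^ n * (1 + (b / a) ^ n) := by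
    rw [div_pow, mul_add, mul_div_cancel₀ _ (pow_ne_zero n ha.ne'), mul_one]
  have hbern : (1 + (b / a) ^ n) ^ ((n : ℝ)⁻¹) ≤ 1 + (n : ℝ)⁻¹ * (b / a) ^ n :=
    rpow_one_add_le_one_add_mul_self (by linarith [show 0 ≤ (b / a) ^ n by positivity])
      (by positivity) (inv_le_one_of_one_le₀ (by exact_mod_cast Nat.one_le_iff_ne_zero.2 hn))
  rw [hfactor, Real.mul_rpow (by positivity) (by positivity), Real.pow_rpow_inv_natCast ha.le hn]
  gcongr
  exact hbern.trans_eq (by ring)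

lemma integral_zero_one_eq_two_mul_of_symm {f : ℝ → ℝ}
    (hf : IntervalIntegrable f volume 0 1) (hsymm : ∀ x, f (1 - x) = f x) :
    ∫ x in (0:ℝ)..1, f x = 2 * ∫ x in (1/2:ℝ)..1, f x := by
  have hleft : ∫ x in (0:ℝ)..1/2, f x = ∫ x in (1/2:ℝ)..1, f x := by
    have := intervalIntegral.integral_comp_sub_left f (a := (1/2:ℝ)) (b := 1) 1
    norm_num [hsymm] at this
    exact this.symm
  rw [← intervalIntegral.integral_add_adjacent_intervals (b := 1/2)
    (hf.mono_set (uIcc_subset_uIcc_left (by norm_num)))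
    (hf.mono_set (uIcc_subset_uIcc_right (by norm_num))), hleft, two_mul]

section Integrand

variable {n : ℕ} {x : ℝ}

lemma sq_le_integrand (hn : n ≠ 0) (hx : x ∈ Icc (1/2 : ℝ) 1) :
    x ^ 2 ≤ (x ^ n + (1 - x) ^ n) ^ ((n : ℝ)⁻¹) * max x (1 - x) := by
  obtain ⟨hx₀, hx₁⟩ := hx
  rw [max_eq_left (by linarith), sq]
  gcongr
  exact le_pow_add_pow_rpow_inv_natCast (by linarith) (by linarith) hn

lemma integrand_le (hn : n ≠ 0) (hx : x ∈ Icc (1/2 : ℝ) 1) :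
    (x ^ n + (1 - x) ^ n) ^ ((n : ℝ)⁻¹) * max x (1 - x) ≤ x ^ 2 + (2 * (1 - x)) ^ n / n := by
  obtain ⟨hx₀, hx₁⟩ := hx
  have hratio : (1 - x) / x ≤ 2 * (1 - x) := by
    rw [div_le_iff₀ (by linarith)]; nlinarith
  have hgap : x ^ 2 * ((1 - x) / x) ^ n ≤ (2 * (1 - x)) ^ n :=
    calc x ^ 2 * ((1 - x) / x) ^ n ≤ 1 * (2 * (1 - x)) ^ n := by
          gcongr ?_ * ?_
          · nlinarith
          · exact pow_le_pow_left₀ (div_nonneg (by linarith) (by linarith)) hratio n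
      _ = (2 * (1 - x)) ^ n := one_mul _
  rw [max_eq_left (by linarith)]
  calc (x ^ n + (1 - x) ^ n) ^ ((n : ℝ)⁻¹) * x ≤ x * (1 + ((1 - x) / x) ^ n / n) * x := by
        gcongr
        exact pow_add_pow_rpow_inv_natCast_le (by linarith) (by linarith) hn
    _ = x ^ 2 + x ^ 2 * ((1 - x) / x) ^ n / n := by ring
    _ ≤ x ^ 2 + (2 * (1 - x)) ^ n / n := by gcongr

lemma continuous_integrand (n : ℕ) :
    Continuous fun x : ℝ => (x ^ n + (1 - x) ^ n) ^ ((n : ℝ)⁻¹) * max x (1 - x) := by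
  refine Continuous.mul (Continuous.rpow_const (by fun_prop) fun _ => Or.inr (by positivity)) ?_
  fun_prop

end Integrand

lemma integral_sq_half_one : ∫ x in (1/2 : ℝ)..1, x ^ 2 = 7 / 24 := by
  norm_num [integral_pow]

lemma integral_two_mul_one_sub_pow_half_one (n : ℕ) :
    ∫ x in (1/2 : ℝ)..1, (2 * (1 - x)) ^ n = 1 / (2 * (n + 1)) := by
  simp only [mul_sub, mul_one]
  norm_num [intervalIntegral.integral_comp_sub_mul (fun y : ℝ => y ^ n), integral_pow]
  ring

lemma abs_integral_sub_le {n : ℕ} (hn : n ≠ 0) :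
    |(∫ x in (0:ℝ)..1, (x ^ n + (1 - x) ^ n) ^ ((n : ℝ)⁻¹) * max x (1 - x)) - 7 / 12|
      ≤ 1 / (n * (n + 1)) := by
  have hsymm (x : ℝ) : ((1 - x) ^ n + (1 - (1 - x)) ^ n) ^ ((n : ℝ)⁻¹) * max (1 - x) (1 - (1 - x))
      = (x ^ n + (1 - x) ^ n) ^ ((n : ℝ)⁻¹) * max x (1 - x) := by
    rw [sub_sub_cancel, add_comm, max_comm]
  have hrem : IntervalIntegrable (fun x : ℝ => (2 * (1 - x)) ^ n / n) volume (1/2) 1 :=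
    (by fun_prop : Continuous fun x : ℝ => (2 * (1 - x)) ^ n / n).intervalIntegrable _ _
  have hsq : IntervalIntegrable (fun x : ℝ => x ^ 2) volume (1/2) 1 :=
    (continuous_pow 2).intervalIntegrable _ _
  have hF := (continuous_integrand n).intervalIntegrable (μ := volume) (1/2) 1
  have hlower := intervalIntegral.integral_mono_on (by norm_num) hsq hF
    fun x hx => sq_le_integrand hn hx
  have hupper := intervalIntegral.integral_mono_on (by norm_num) hF (hsq.add hrem)
    fun x hx => integrand_le hn hx
  rw [intervalIntegral.integral_add hsq hrem, intervalIntegral.integral_div,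
    integral_two_mul_one_sub_pow_half_one, integral_sq_half_one] at hupper
  rw [integral_sq_half_one] at hlower
  rw [integral_zero_one_eq_two_mul_of_symm ((continuous_integrand n).intervalIntegrable 0 1) hsymm,
    abs_le]
  have hn' : (0 : ℝ) < n := by positivity
  constructor
  · linarith [show (0 : ℝ) ≤ 1 / (n * (n + 1)) by positivity]
  · calc _ ≤ 2 * (7 / 24 + 1 / (2 * ((n : ℝ) + 1)) / n) - 7 / 12 := by linarith
      _ = 1 / (n * (n + 1)) := by field_simp; ring

/-- As `n → ∞` along positive integers,
`∫₀¹ (xⁿ + (1-x)ⁿ)^{1/n} · max(x, 1-x) dx = 7/12 + O(1/n²)`; note `7/12 = (2/3)·(7/8)`,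
i.e. `E(Z_n Z_∞) = (2/3)·(7/8) + O(n^{-2})`. -/
theorem stmt15 :
    (fun n : ℕ =>
        (∫ x in (0:ℝ)..1, (x ^ n + (1 - x) ^ n) ^ ((n : ℝ)⁻¹) * max x (1 - x)) -
          2 / 3 * (7 / 8))
      =O[atTop] (fun n : ℕ => ((n : ℝ) ^ 2)⁻¹) := by
  refine isBigO_iff.2 ⟨1, ?_⟩
  filter_upwards [eventually_ne_atTop 0] with n hn
  have hn' : (0 : ℝ) < n := by positivity
  rw [Real.norm_eq_abs, Real.norm_of_nonneg (by positivity), one_mul]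
  calc _ ≤ 1 / ((n : ℝ) * (n + 1)) := by norm_num only [abs_integral_sub_le hn]
    _ ≤ ((n : ℝ) ^ 2)⁻¹ := by
      rw [one_div, sq]
      gcongr
      linarith
end

section
/- For all positive integers r and m, ∑_{j=1}^{m} C(m, j)/j^r = ∑_{m ≥ n₁ ≥ n₂ ≥ ⋯ ≥ n_r ≥ 1} (2^{n_r} − 1)/(n₁ n₂ ⋯ n_r), where C denotes binomial coefficients; i.e., the binomial sum equals ζ*_m({1}_r; {1}_{r-1}, 2) − ζ*_m({1}_r) in terms of (weighted) truncated multiple zeta star values. -/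
/-!
Write `B_r(m) = ∑_{j=1}^m C(m,j)/j^r`. Pascal's rule together with
`C(m,k)/(k+1) = C(m+1,k+1)/(m+1)` gives `B_{r+1}(m+1) - B_{r+1}(m) = B_r(m+1)/(m+1)`, hence
`B_{r+1}(m) = ∑_{n=1}^m B_r(n)/n`. Since `B_0(n) = 2^n - 1`, the binomial sums obey the same
recursion and initial values as `ζ*_m({1}_r; {1}_{r-1}, 2) - ζ*_m({1}_r)`.
-/

/-- Truncated multiple zeta star value `ζ*_m({1}_r) = ∑_{m ≥ n₁ ≥ ⋯ ≥ n_r ≥ 1} 1/(n₁⋯n_r)`. -/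
noncomputable def pstar : ℕ → ℕ → ℝ
  | 0, _ => 1
  | r + 1, m => ∑ n ∈ Finset.Icc 1 m, (1 / (n : ℝ)) * pstar r n

/-- Weighted truncated multiple zeta star value
`ζ*_m({1}_r ; {1}_{r-1}, 2) = ∑_{m ≥ n₁ ≥ ⋯ ≥ n_r ≥ 1} 2^{n_r}/(n₁⋯n_r)` (for `r ≥ 1`). -/
noncomputable def wstar : ℕ → ℕ → ℝ
  | 0, _ => 1
  | 1, m => ∑ n ∈ Finset.Icc 1 m, (2 : ℝ) ^ n / (n : ℝ)
  | r + 2, m => ∑ n ∈ Finset.Icc 1 m, (1 / (n : ℝ)) * wstar (r + 1) n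

open Finset

noncomputable def binomSum (r m : ℕ) : ℝ := ∑ j ∈ Icc 1 m, (m.choose j : ℝ) / (j : ℝ) ^ r

lemma binomSum_zero (m : ℕ) : binomSum 0 m = 2 ^ m - 1 := by
  have h := Nat.sum_range_choose m
  rw [Nat.range_succ_eq_Icc_zero, ← insert_Icc_add_one_left_eq_Icc m.zero_le,
    sum_insert (by simp), Nat.choose_zero_right] at h
  simp only [binomSum, pow_zero, div_one]
  rw [← Nat.cast_sum, eq_sub_iff_add_eq]
  exact_mod_cast (add_comm _ _).trans h

lemma cast_choose_div_add_one (m k : ℕ) :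
    (m.choose k : ℝ) / (k + 1) = ((m + 1).choose (k + 1) : ℝ) / (m + 1) := by
  rw [div_eq_div_iff (by positivity) (by positivity), mul_comm]
  exact_mod_cast Nat.add_one_mul_choose_eq m k

lemma binomSum_succ_sub (r m : ℕ) :
    binomSum (r + 1) (m + 1) - binomSum (r + 1) m = binomSum r (m + 1) / (m + 1) := by
  have hext : binomSum (r + 1) m = ∑ j ∈ Icc 1 (m + 1), (m.choose j : ℝ) / (j : ℝ) ^ (r + 1) := by
    rw [sum_Icc_succ_top (by omega), Nat.choose_succ_self, Nat.cast_zero, zero_div, add_zero]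
    rfl
  rw [hext, binomSum, binomSum, ← sum_sub_distrib, sum_div]
  refine sum_congr rfl fun j hj => ?_
  obtain ⟨k, rfl⟩ : ∃ k, j = k + 1 := ⟨j - 1, by grind⟩
  have hpascal : ((m + 1).choose (k + 1) : ℝ) - m.choose (k + 1) = m.choose k := by
    rw [Nat.choose_succ_succ', Nat.cast_add, add_sub_cancel_right]
  rw [← sub_div, hpascal, pow_succ', ← div_div, Nat.cast_add_one, cast_choose_div_add_one]
  ring

lemma binomSum_succ (r m : ℕ) :
    binomSum (r + 1) m = ∑ n ∈ Icc 1 m, binomSum r n / n := by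
  induction m with
  | zero => simp [binomSum]
  | succ m ih =>
    rw [sum_Icc_succ_top (by omega), ← ih, Nat.cast_add_one, ← binomSum_succ_sub]
    ring

lemma wstar_succ {r : ℕ} (hr : 1 ≤ r) (m : ℕ) :
    wstar (r + 1) m = ∑ n ∈ Icc 1 m, 1 / (n : ℝ) * wstar r n := by
  obtain ⟨s, rfl⟩ := Nat.exists_eq_add_of_le' hr
  rfl

theorem stmt19_general (r m : ℕ) (hr : 1 ≤ r) :
    ∑ j ∈ Finset.Icc 1 m, (m.choose j : ℝ) / (j : ℝ) ^ r = wstar r m - pstar r m := by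
  change binomSum r m = _
  induction r, hr using Nat.le_induction generalizing m with
  | base =>
    simp only [binomSum_succ, binomSum_zero, wstar, pstar, ← sum_sub_distrib]
    exact sum_congr rfl fun _ _ => by ring
  | succ r hr ih =>
    simp only [binomSum_succ, ih, wstar_succ hr, pstar, ← sum_sub_distrib]
    exact sum_congr rfl fun _ _ => by ring

/-- For all positive integers `r` and `m`,
`∑_{j=1}^{m} C(m,j)/j^r = ∑_{m ≥ n₁ ≥ ⋯ ≥ n_r ≥ 1} (2^{n_r} − 1)/(n₁ ⋯ n_r)`, i.e. the
binomial sum equals `ζ*_m({1}_r ; {1}_{r-1}, 2) − ζ*_m({1}_r)`. -/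
theorem stmt19 (r m : ℕ) (hr : 1 ≤ r) (hm : 1 ≤ m) :
    ∑ j ∈ Finset.Icc 1 m, (m.choose j : ℝ) / (j : ℝ) ^ r = wstar r m - pstar r m :=
  stmt19_general r m hr
end
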